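/- arXiv:1911.04841 — 2 statements merged into one kernel-verified Lean document; each statement's English description precedes it below -/
import Mathlib

section
/- Let M̂ be a real-valued random variable with μ̂₁ = E[M̂] > 0 and μ̂₂ = E[M̂²] < ∞. Suppose R̂ and R are real numbers with R̂ = P(M̂ ≤ 0), R̂ ≥ (1 − β) + βR for some β ≥ 1. Then R ≤ 1 − (1/β)·(μ̂₁²/μ̂₂). -/
open MeasureTheory ProbabilityTheory

/-!
Since `1 ≤ (1 - t M)²` wherever `M ≤ 0` and `t ≥ 0`, Markov's inequality gives
`P(M ≤ 0) ≤ E[(1 - t M)²] = 1 - 2 t μ₁ + t² μ₂`; the choice `t = μ₁ / μ₂` yields the C-bound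
`R̂ ≤ 1 - μ₁² / μ₂`, and Chittineni's bound `(1 - β) + β R ≤ R̂` then gives the claim after
dividing by `β > 0`.
-/

section

variable {Ω : Type*} [MeasurableSpace Ω] {μ : Measure Ω} {M : Ω → ℝ}

theorem measureReal_nonpos_le_integral_one_sub_mul_sq [IsFiniteMeasure μ] (hM : MemLp M 2 μ)
    {t : ℝ} (ht : 0 ≤ t) : μ.real {ω | M ω ≤ 0} ≤ ∫ ω, (1 - t * M ω) ^ 2 ∂μ := by
  have hint : Integrable (fun ω => (1 - t * M ω) ^ 2) μ :=
    ((memLp_const 1).sub (hM.const_mul t)).integrable_sq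
  have hsub : {ω | M ω ≤ 0} ⊆ {ω | 1 ≤ (1 - t * M ω) ^ 2} := fun ω (hω : M ω ≤ 0) => by
    change 1 ≤ (1 - t * M ω) ^ 2
    nlinarith [mul_nonpos_of_nonneg_of_nonpos ht hω]
  calc μ.real {ω | M ω ≤ 0} ≤ μ.real {ω | 1 ≤ (1 - t * M ω) ^ 2} := measureReal_mono hsub
    _ = 1 * μ.real {ω | 1 ≤ (1 - t * M ω) ^ 2} := (one_mul _).symm
    _ ≤ ∫ ω, (1 - t * M ω) ^ 2 ∂μ :=
      mul_meas_ge_le_integral_of_nonneg (.of_forall fun _ => sq_nonneg _) hint 1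

theorem integral_one_sub_mul_sq [IsProbabilityMeasure μ] (hM : MemLp M 2 μ) (t : ℝ) :
    ∫ ω, (1 - t * M ω) ^ 2 ∂μ = 1 - 2 * t * ∫ ω, M ω ∂μ + t ^ 2 * ∫ ω, M ω ^ 2 ∂μ := by
  have h1 : Integrable (fun ω => 2 * t * M ω) μ := (hM.integrable one_le_two).const_mul _
  have h2 : Integrable (fun ω => t ^ 2 * M ω ^ 2) μ := hM.integrable_sq.const_mul _
  calc ∫ ω, (1 - t * M ω) ^ 2 ∂μ = ∫ ω, (1 - 2 * t * M ω + t ^ 2 * M ω ^ 2) ∂μ := by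
        congr 1; ext ω; ring
    _ = _ := by
      have h0 : Integrable (fun ω => 1 - 2 * t * M ω) μ := (integrable_const 1).sub h1
      rw [integral_add h0 h2, integral_sub (integrable_const 1) h1,
        integral_const_mul, integral_const_mul, integral_const, probReal_univ, one_smul]

theorem measureReal_nonpos_le_one_sub_sq_integral_div [IsProbabilityMeasure μ]
    (hM : MemLp M 2 μ) (hμ₁ : 0 ≤ ∫ ω, M ω ∂μ) :
    μ.real {ω | M ω ≤ 0} ≤ 1 - (∫ ω, M ω ∂μ) ^ 2 / ∫ ω, M ω ^ 2 ∂μ := by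
  set μ₁ := ∫ ω, M ω ∂μ
  set μ₂ := ∫ ω, M ω ^ 2 ∂μ
  have hμ₂ : 0 ≤ μ₂ := integral_nonneg fun _ => sq_nonneg _
  rcases hμ₂.eq_or_lt with hzero | hpos
  · simp [← hzero]
  -- `t = μ₁ / μ₂` minimises `1 - 2 t μ₁ + t² μ₂`
  · have key := measureReal_nonpos_le_integral_one_sub_mul_sq hM (div_nonneg hμ₁ hμ₂)
    rw [integral_one_sub_mul_sq hM] at key
    convert key using 1
    field_simp
    ring

end

/-- Probabilistic C-bound with imperfect labels (Proposition 2). -/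
theorem cbound_imperfect_labels {Ω : Type*} [MeasureSpace Ω]
    [IsProbabilityMeasure (ℙ : Measure Ω)]
    (M : Ω → ℝ) (hM : MemLp M 2 ℙ) (hμ₁ : 0 < ∫ ω, M ω)
    (R Rhat β : ℝ) (hβ : 1 ≤ β)
    (hRhat : Rhat = (ℙ {ω | M ω ≤ 0}).toReal)
    (hChit : (1 - β) + β * R ≤ Rhat) :
    R ≤ 1 - (1 / β) * ((∫ ω, M ω) ^ 2 / (∫ ω, (M ω) ^ 2)) := by
  have hC : Rhat ≤ 1 - (∫ ω, M ω) ^ 2 / ∫ ω, M ω ^ 2 :=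
    hRhat ▸ measureReal_nonpos_le_one_sub_sq_integral_div hM hμ₁.le
  have hβ₀ : 0 < β := one_pos.trans_le hβ
  rw [one_div_mul_eq_div, le_sub_iff_add_le, ← le_sub_iff_add_le', div_le_iff₀ hβ₀]
  linarith
end

section
/- Let M̂ be a real-valued random variable with μ̂₁ = E[M̂] > 0 and μ̂₂ = E[M̂²] < ∞, and let R, β, γ be reals with 1 ≤ β ≤ γ and P(M̂ ≤ 0) ≥ (1 − β) + βR. Then R ≤ 1 − (1/γ)·(μ̂₁²/μ̂₂). -/
/-!
Pointwise, `2 t x ≤ x² + t² 𝟙{x > 0}` for `t ≥ 0` (it is `(x - t)² ≥ 0` when `x > 0`).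
Integrating gives `2 t μ̂₁ ≤ μ̂₂ + t² ℙ(M̂ > 0)` for every `t ≥ 0`, and the optimal choice
`t = μ̂₁ / ℙ(M̂ > 0)` yields the second-moment bound `ℙ(M̂ ≤ 0) ≤ 1 - μ̂₁² / μ̂₂`.
Combined with the hypothesis this gives `R ≤ 1 - μ̂₁² / (β μ̂₂)`, and `β ≤ γ` weakens it.
-/

open MeasureTheory ProbabilityTheory

theorem sq_le_mul_of_forall_two_mul_le {a b c : ℝ} (ha : 0 < a)
    (h : ∀ t ≥ 0, 2 * t * a ≤ b + t ^ 2 * c) : a ^ 2 ≤ b * c := by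
  have hc : 0 < c := by
    by_contra! hc
    have hlarge := h ((|b| + 1) / (2 * a)) (by positivity)
    rw [show 2 * ((|b| + 1) / (2 * a)) * a = |b| + 1 by field_simp] at hlarge
    nlinarith [le_abs_self b, sq_nonneg ((|b| + 1) / (2 * a))]
  have hopt := h (a / c) (by positivity)
  rw [show (a / c) ^ 2 * c = a ^ 2 / c by field_simp,
    show 2 * (a / c) * a = 2 * (a ^ 2 / c) by ring] at hopt
  rw [← div_le_iff₀ hc]
  linarith

section

variable {Ω : Type*} [MeasurableSpace Ω] {μ : Measure Ω} [IsProbabilityMeasure μ] {M : Ω → ℝ}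

theorem two_mul_integral_add_sq_mul_measureReal_nonpos_le (hM : MemLp M 2 μ) {t : ℝ}
    (ht : 0 ≤ t) :
    2 * t * ∫ ω, M ω ∂μ + t ^ 2 * μ.real {ω | M ω ≤ 0} ≤ ∫ ω, M ω ^ 2 ∂μ + t ^ 2 := by
  set s := {ω | M ω ≤ 0}
  have hs : NullMeasurableSet s μ :=
    hM.aestronglyMeasurable.nullMeasurableSet_le aestronglyMeasurable_const
  have hind : Integrable (s.indicator 1) μ := (integrable_const (1 : ℝ)).indicator₀ hs
  have hpointwise (ω : Ω) : 2 * t * M ω + t ^ 2 * s.indicator 1 ω ≤ M ω ^ 2 + t ^ 2 := by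
    by_cases hω : M ω ≤ 0
    · simp [s, hω]; nlinarith
    · simp [s, hω]; nlinarith [sq_nonneg (M ω - t)]
  have hmono := integral_mono (μ := μ) (f := fun ω ↦ 2 * t * M ω + t ^ 2 * s.indicator 1 ω)
    (g := fun ω ↦ M ω ^ 2 + t ^ 2) (((hM.integrable one_le_two).const_mul (2 * t)).add
    (hind.const_mul (t ^ 2))) (hM.integrable_sq.add (integrable_const (t ^ 2))) hpointwise
  rw [integral_add ((hM.integrable one_le_two).const_mul _) (hind.const_mul _),
    integral_add hM.integrable_sq (integrable_const _), integral_const_mul, integral_const_mul,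
    integral_indicator₀ hs] at hmono
  simpa using hmono

theorem measureReal_nonpos_le_one_sub_sq_integral_div_integral_sq (hM : MemLp M 2 μ)
    (hμ₁ : 0 < ∫ ω, M ω ∂μ) :
    μ.real {ω | M ω ≤ 0} ≤ 1 - (∫ ω, M ω ∂μ) ^ 2 / ∫ ω, M ω ^ 2 ∂μ := by
  have hsq := sq_le_mul_of_forall_two_mul_le (b := ∫ ω, M ω ^ 2 ∂μ)
      (c := 1 - μ.real {ω | M ω ≤ 0}) hμ₁ fun t ht ↦ by
    linarith [two_mul_integral_add_sq_mul_measureReal_nonpos_le hM ht]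
  have hμ₂ : 0 < ∫ ω, M ω ^ 2 ∂μ := by
    refine (integral_nonneg fun ω ↦ sq_nonneg (M ω)).lt_of_ne fun h ↦ ?_
    rw [← h, zero_mul] at hsq
    nlinarith
  have hratio : (∫ ω, M ω ∂μ) ^ 2 / ∫ ω, M ω ^ 2 ∂μ ≤ 1 - μ.real {ω | M ω ≤ 0} :=
    (div_le_iff₀ hμ₂).2 (by linarith [mul_comm (∫ ω, M ω ^ 2 ∂μ) (1 - μ.real {ω | M ω ≤ 0})])
  linarith

end

/-- C-bound with imperfect labels and the `γ`-correction (Theorem 3). -/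
theorem cbound_imperfect_labels_gamma {Ω : Type*} [MeasureSpace Ω]
    [IsProbabilityMeasure (ℙ : Measure Ω)]
    (M : Ω → ℝ) (hM : MemLp M 2 ℙ) (hμ₁ : 0 < ∫ ω, M ω)
    (R β γ : ℝ) (hβ : 1 ≤ β) (hβγ : β ≤ γ)
    (hChit : (1 - β) + β * R ≤ (ℙ {ω | M ω ≤ 0}).toReal) :
    R ≤ 1 - (1 / γ) * ((∫ ω, M ω) ^ 2 / (∫ ω, (M ω) ^ 2)) := by
  set r := (∫ ω, M ω) ^ 2 / (∫ ω, (M ω) ^ 2)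
  have hr : 0 ≤ r := div_nonneg (sq_nonneg _) (integral_nonneg fun ω ↦ sq_nonneg (M ω))
  have hβ₀ : 0 < β := zero_lt_one.trans_le hβ
  have hmoment := measureReal_nonpos_le_one_sub_sq_integral_div_integral_sq hM hμ₁
  rw [measureReal_def] at hmoment
  have hβR : r / β ≤ 1 - R := (div_le_iff₀' hβ₀).2 (by linarith)
  calc R ≤ 1 - r / β := by linarith
    _ ≤ 1 - (1 / γ) * r := by
      rw [one_div_mul_eq_div]
      gcongr
end
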